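/- For every n ≥ 0, the largest nonnegative integer ξ such that L_{2n+4} F_ξ + L_{2n+5} F_{ξ+1} ≤ L_{2n+4} L_{2n+5} L_{2n+6} / 5 is ξ = 4n + 6. -/
import Mathlib


def lucas : ℕ → ℕ
  | 0 => 2
  | 1 => 1
  | n + 2 => lucas (n + 1) + lucas n

lemma lucas_add_two (n : ℕ) : lucas (n + 2) = lucas (n + 1) + lucas n := rfl

lemma lucas_pos (n : ℕ) : 0 < lucas n := by
  induction n using Nat.twoStepInduction with
  | zero => decide
  | one => decide
  | more n ih _ => rw [lucas_add_two]; omega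

lemma lucasZ_add_two (n : ℕ) : (lucas (n + 2) : ℤ) = lucas (n + 1) + lucas n := by
  rw [lucas_add_two]; push_cast; ring

lemma lucas_inv (m : ℕ) :
    ((lucas (m+1) : ℤ))^2 - (lucas (m+1) : ℤ) * (lucas m : ℤ) - (lucas m : ℤ)^2
      = -5 * (-1)^m := by
  induction m with
  | zero => norm_num [lucas]
  | succ k ih =>
    rw [lucasZ_add_two, pow_succ]
    linear_combination -ih

lemma lucas_sq_mul (m : ℕ) :
    ((lucas m : ℤ))^2 = (lucas (2*m) : ℤ) + 2 * (-1)^m ∧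
    ((lucas m : ℤ)) * (lucas (m+1) : ℤ) = (lucas (2*m+1) : ℤ) + (-1)^m := by
  induction m with
  | zero => norm_num [lucas]
  | succ k ih =>
    obtain ⟨h1, h2⟩ := ih
    have e1 : 2 * (k+1) = (2*k) + 2 := by ring
    have e2 : 2 * (k+1) + 1 = (2*k+1) + 2 := by ring
    have r := lucas_inv k
    constructor
    · rw [e1, lucasZ_add_two, pow_succ]
      linear_combination r + h1 + h2
    · rw [e2, lucasZ_add_two, lucasZ_add_two, lucas_add_two]
      push_cast
      rw [pow_succ]
      linear_combination r + h1 + 2 * h2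

lemma lucas_mul (k m : ℕ) :
    (lucas (m + k) : ℤ) * lucas k = lucas (m + 2*k) + (-1)^k * lucas m := by
  induction m using Nat.twoStepInduction with
  | zero =>
    simp only [Nat.zero_add, lucas]
    push_cast
    linear_combination (lucas_sq_mul k).1
  | one =>
    have := (lucas_sq_mul k).2
    simp only [Nat.add_comm 1 k, Nat.add_comm 1 (2*k), lucas]
    push_cast
    linear_combination this
  | more m ih1 ih2 =>
    have e1 : m + 2 + k = (m + k) + 2 := by ring
    have e2 : m + 2 + 2*k = (m + 2*k) + 2 := by ring
    have e3 : m + 1 + k = (m + k) + 1 := by ring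
    have e4 : m + 1 + 2*k = (m + 2*k) + 1 := by ring
    rw [e1, e2, lucasZ_add_two, lucasZ_add_two, lucasZ_add_two]
    rw [e3, e4] at ih2
    linear_combination ih1 + ih2

lemma lucas_fib (m k : ℕ) :
    lucas m * Nat.fib k + lucas (m+1) * Nat.fib (k+1) = lucas (m + k + 1) := by
  induction k using Nat.twoStepInduction with
  | zero => simp
  | one =>
    have : m + 1 + 1 = m + 2 := rfl
    simp [Nat.fib_one, Nat.fib_two, lucas_add_two, this]
    omega
  | more k ih1 ih2 =>
    have f1 : Nat.fib (k+2) = Nat.fib (k+1) + Nat.fib k := by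
      rw [Nat.fib_add_two]; ring
    have f2 : Nat.fib (k+3) = Nat.fib (k+2) + Nat.fib (k+1) := by
      rw [show k+3 = (k+1)+2 from rfl, Nat.fib_add_two]; ring
    have e : m + (k+2) + 1 = (m + k + 1) + 2 := by ring
    rw [e, lucas_add_two, f1, f2, f1]
    zify
    zify at ih1 ih2
    rw [show m + (k+1) + 1 = m + k + 1 + 1 from by ring,
        show k + 1 + 1 = k + 2 from rfl, f1] at ih2
    push_cast at ih2
    linear_combination ih1 + ih2

lemma lucas_mono {a b : ℕ} (h1 : 1 ≤ a) (h : a ≤ b) : lucas a ≤ lucas b := by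
  induction b with
  | zero => omega
  | succ c ih =>
    rcases Nat.lt_or_ge a (c+1) with hlt | hge
    · have hc : a ≤ c := by omega
      have h2 : lucas c ≤ lucas (c+1) := by
        obtain ⟨d, rfl⟩ : ∃ d, c = d + 1 := ⟨c - 1, by omega⟩
        rw [lucas_add_two]
        omega
      exact le_trans (ih hc) h2
    · have : a = c + 1 := by omega
      rw [this]

-- product identity: L_{2n+4} L_{2n+5} L_{2n+6} = L_{6n+15} + L_{2n+3} + L_{2n+6}
lemma lucas_product (n : ℕ) :
    (lucas (2*n+4) : ℤ) * lucas (2*n+5) * lucas (2*n+6)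
      = lucas (6*n+15) + lucas (2*n+3) + lucas (2*n+6) := by
  have h1 : (lucas (2*n+4) : ℤ) * lucas (2*n+5) = lucas (4*n+9) + 1 := by
    have := (lucas_sq_mul (2*n+4)).2
    rw [show 2*(2*n+4) = 4*n+8 from by ring, show (4*n+8)+1 = 4*n+9 from rfl] at this
    rw [show ((-1:ℤ))^(2*n+4) = 1 from by rw [show 2*n+4 = 2*(n+2) from by ring, pow_mul]; norm_num] at this
    rw [show 2*n+5 = (2*n+4)+1 from rfl]
    exact this
  have h2 : (lucas (4*n+9) : ℤ) * lucas (2*n+6) = lucas (6*n+15) + lucas (2*n+3) := by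
    have := lucas_mul (2*n+6) (2*n+3)
    rw [show (2*n+3) + (2*n+6) = 4*n+9 from by ring,
        show (2*n+3) + 2*(2*n+6) = 6*n+15 from by ring,
        show ((-1:ℤ))^(2*n+6) = 1 from by rw [show 2*n+6 = 2*(n+3) from by ring, pow_mul]; norm_num] at this
    simpa using this
  rw [h1]
  linear_combination h2

lemma lucas_prod_nat (n : ℕ) :
    lucas (2*n+4) * lucas (2*n+5) * lucas (2*n+6)
      = lucas (6*n+15) + lucas (2*n+3) + lucas (2*n+6) := by
  have := lucas_product n
  exact_mod_cast this

lemma lucas_expand (n : ℕ) :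
    lucas (6*n+15) = 5 * lucas (6*n+11) + 3 * lucas (6*n+10) ∧
    lucas (6*n+12) = lucas (6*n+11) + lucas (6*n+10) := by
  have a1 : lucas (6*n+15) = lucas (6*n+14) + lucas (6*n+13) := by
    rw [show 6*n+15 = 6*n+13+2 from by ring, show 6*n+14 = 6*n+13+1 from by ring,
        lucas_add_two]
  have a2 : lucas (6*n+14) = lucas (6*n+13) + lucas (6*n+12) := by
    rw [show 6*n+14 = 6*n+12+2 from by ring, show 6*n+13 = 6*n+12+1 from by ring,
        lucas_add_two]
  have a3 : lucas (6*n+13) = lucas (6*n+12) + lucas (6*n+11) := by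
    rw [show 6*n+13 = 6*n+11+2 from by ring, show 6*n+12 = 6*n+11+1 from by ring,
        lucas_add_two]
  have a4 : lucas (6*n+12) = lucas (6*n+11) + lucas (6*n+10) := by
    rw [show 6*n+12 = 6*n+10+2 from by ring, show 6*n+11 = 6*n+10+1 from by ring,
        lucas_add_two]
  omega

lemma keyA (n : ℕ) :
    5 * lucas (6*n+11) ≤ lucas (2*n+4) * lucas (2*n+5) * lucas (2*n+6) := by
  rw [lucas_prod_nat]
  have := lucas_expand n
  omega

lemma keyB (n : ℕ) :
    lucas (2*n+4) * lucas (2*n+5) * lucas (2*n+6) < 5 * lucas (6*n+12) := by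
  rw [lucas_prod_nat]
  have he := lucas_expand n
  have m1 : lucas (2*n+3) ≤ lucas (6*n+9) := lucas_mono (by omega) (by omega)
  have m2 : lucas (2*n+6) ≤ lucas (6*n+9) := lucas_mono (by omega) (by omega)
  have m3 : lucas (6*n+10) = lucas (6*n+9) + lucas (6*n+8) := by
    rw [show 6*n+10 = 6*n+8+2 from by ring, show 6*n+9 = 6*n+8+1 from by ring,
        lucas_add_two]
  have p := lucas_pos (6*n+8)
  omega

theorem lucas_xi_value (n : ℕ) :
    IsGreatest {ξ : ℕ |
      ((lucas (2 * n + 4) * Nat.fib ξ + lucas (2 * n + 5) * Nat.fib (ξ + 1) : ℕ) : ℝ)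
        ≤ ((lucas (2 * n + 4) * lucas (2 * n + 5) * lucas (2 * n + 6) : ℕ) : ℝ) / 5}
      (4 * n + 6) := by
  constructor
  · show ((_ : ℕ) : ℝ) ≤ _
    rw [le_div_iff₀ (by norm_num : (0:ℝ) < 5)]
    have hf := lucas_fib (2*n+4) (4*n+6)
    rw [show 2*n+4+1 = 2*n+5 from by ring,
        show 2*n+4 + (4*n+6) + 1 = 6*n+11 from by ring] at hf
    have hA := keyA n
    have hN : (lucas (2*n+4) * Nat.fib (4*n+6) + lucas (2*n+5) * Nat.fib (4*n+6+1)) * 5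
        ≤ lucas (2*n+4) * lucas (2*n+5) * lucas (2*n+6) := by omega
    exact_mod_cast hN
  · intro ξ hξ
    by_contra hc
    push_neg at hc
    have hξ' : (lucas (2*n+4) * Nat.fib ξ + lucas (2*n+5) * Nat.fib (ξ+1)) * 5
        ≤ lucas (2*n+4) * lucas (2*n+5) * lucas (2*n+6) := by
      have := hξ
      rw [Set.mem_setOf_eq, le_div_iff₀ (by norm_num : (0:ℝ) < 5)] at this
      exact_mod_cast this
    have hf := lucas_fib (2*n+4) (4*n+7)
    rw [show 2*n+4+1 = 2*n+5 from by ring,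
        show 2*n+4 + (4*n+7) + 1 = 6*n+12 from by ring] at hf
    have hB := keyB n
    have c1 : lucas (2*n+4) * Nat.fib (4*n+7) ≤ lucas (2*n+4) * Nat.fib ξ :=
      Nat.mul_le_mul_left _ (Nat.fib_mono (by omega))
    have c2 : lucas (2*n+5) * Nat.fib (4*n+7+1) ≤ lucas (2*n+5) * Nat.fib (ξ+1) :=
      Nat.mul_le_mul_left _ (Nat.fib_mono (by omega))
    omega
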